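/- Let m ∈ ℕ and f ∈ Z^{m,1}(ℝ). Then for every bounded interval I ⊆ ℝ there exist C > 0 and h₀ > 0 such that for all x ∈ I and all h with 0 < |h| ≤ h₀: | (1/2^m) f(x + 2h) − 2 f(x + h) + Σ_{j=0}^m (2 − 1/2^{m−j}) (f^{(j)}(x)/j!) h^j | ≤ C |h|^{m+1}. -/

import Mathlib

/-- The local Zygmund class `Z^{m,1}(ℝ)`: `C^m` functions whose `m`-th derivative satisfies a
Zygmund (second difference) estimate on every compact set. -/
def ZygmundClassR (m : ℕ) (f : ℝ → ℝ) : Prop :=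
  ContDiff ℝ m f ∧
    ∀ K : Set ℝ, IsCompact K →
      ∃ C : ℝ, ∀ x h : ℝ, x ∈ K → x + h ∈ K → x - h ∈ K → h ≠ 0 →
        |iteratedDeriv m f (x + h) - 2 * iteratedDeriv m f x + iteratedDeriv m f (x - h)|
          ≤ C * |h|

/-- **Lemma 3.7 (Taylor formula for Zygmund functions).** If `f ∈ Z^{m,1}(ℝ)`, then on every
bounded interval `I`,
`2^{-m} f(x+2h) - 2 f(x+h) + ∑_{j=0}^m (2 - 2^{-(m-j)}) f^{(j)}(x) h^j / j! = O(|h|^{m+1})`. -/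
theorem zygmund_taylor_formula (m : ℕ) (f : ℝ → ℝ) (hf : ZygmundClassR m f)
    (I : Set ℝ) (hI : Bornology.IsBounded I) :
    ∃ C > (0 : ℝ), ∃ h₀ > (0 : ℝ), ∀ x ∈ I, ∀ h : ℝ, 0 < |h| → |h| ≤ h₀ →
      |(1 / 2 ^ m) * f (x + 2 * h) - 2 * f (x + h) +
          ∑ j ∈ Finset.range (m + 1),
            (2 - 1 / 2 ^ (m - j)) * (iteratedDeriv j f x / (j.factorial : ℝ)) * h ^ j|
        ≤ C * |h| ^ (m + 1) := by
  induction m generalizing f with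
  | zero =>
    obtain ⟨R, hR⟩ := hI.subset_closedBall 0
    obtain ⟨C, hC⟩ := hf.2 (Metric.closedBall (0:ℝ) (|R| + 2))
      (isCompact_closedBall 0 _)
    refine ⟨max C 1, lt_of_lt_of_le one_pos (le_max_right _ _), 1, one_pos, ?_⟩
    intro x hx h hh hh1
    have hxR : |x| ≤ |R| := by
      have := hR hx
      rw [Metric.mem_closedBall, Real.dist_eq, sub_zero] at this
      exact this.trans (le_abs_self R)
    have hm : ∀ c : ℝ, |c - x| ≤ 2 → c ∈ Metric.closedBall (0:ℝ) (|R| + 2) := by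
      intro c hc
      rw [Metric.mem_closedBall, Real.dist_eq, sub_zero]
      calc |c| = |(c - x) + x| := by ring_nf
        _ ≤ |c - x| + |x| := abs_add_le _ _
        _ ≤ 2 + |R| := add_le_add hc hxR
        _ = |R| + 2 := by ring
    have key := hC (x + h) h
      (hm _ (by rw [add_sub_cancel_left]; exact hh1.trans one_le_two))
      (hm _ (by rw [show x + h + h - x = 2*h by ring, abs_mul, abs_two]; linarith))
      (hm _ (by rw [show x + h - h - x = (0:ℝ) by ring]; norm_num))
      (abs_pos.mp hh)
    simp only [iteratedDeriv_zero] at key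
    have e : (1 / 2 ^ 0) * f (x + 2 * h) - 2 * f (x + h) +
        ∑ j ∈ Finset.range (0 + 1),
          (2 - 1 / 2 ^ (0 - j)) * (iteratedDeriv j f x / (j.factorial : ℝ)) * h ^ j
        = f (x + h + h) - 2 * f (x + h) + f (x + h - h) := by
      simp [Finset.sum_range_one, iteratedDeriv_zero]
      ring
    rw [e, pow_one]
    calc |f (x + h + h) - 2 * f (x + h) + f (x + h - h)| ≤ C * |h| := key
      _ ≤ max C 1 * |h| := mul_le_mul_of_nonneg_right (le_max_left _ _) (abs_nonneg h)
  | succ n ih =>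
    -- deriv f is in the Zygmund class of order n
    have h1 : ContDiff ℝ ((n : WithTop ℕ∞) + 1) f := by exact_mod_cast hf.1
    obtain ⟨hdiff, -, hcd⟩ := contDiff_succ_iff_deriv.mp h1
    have hf' : ZygmundClassR n (deriv f) := by
      refine ⟨hcd, ?_⟩
      intro K hK
      obtain ⟨C, hC⟩ := hf.2 K hK
      exact ⟨C, by
        intro x h hx h1 h2 h3
        simpa [← iteratedDeriv_succ'] using hC x h hx h1 h2 h3⟩
    obtain ⟨C, hCpos, h₀, hh₀, H⟩ := ih (deriv f) hf'
    refine ⟨C, hCpos, h₀, hh₀, ?_⟩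
    intro x hx h hh hhle
    set g : ℝ → ℝ := fun t => (1 / 2 ^ (n+1)) * f (x + 2 * t) - 2 * f (x + t) +
        ∑ j ∈ Finset.range (n + 2),
          (2 - 1 / 2 ^ (n + 1 - j)) * (iteratedDeriv j f x / (j.factorial : ℝ)) * t ^ j
      with hgdef
    set g' : ℝ → ℝ := fun t => (1 / 2 ^ n) * deriv f (x + 2 * t) - 2 * deriv f (x + t) +
        ∑ j ∈ Finset.range (n + 1),
          (2 - 1 / 2 ^ (n - j)) * (iteratedDeriv j (deriv f) x / (j.factorial : ℝ)) * t ^ j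
      with hg'def
    have hsum : ∀ t : ℝ,
        ∑ j ∈ Finset.range (n + 2),
          ((2 - 1 / 2 ^ (n + 1 - j)) * (iteratedDeriv j f x / (j.factorial : ℝ))) *
            ((j : ℝ) * t ^ (j - 1))
        = ∑ j ∈ Finset.range (n + 1),
          (2 - 1 / 2 ^ (n - j)) * (iteratedDeriv j (deriv f) x / (j.factorial : ℝ)) * t ^ j := by
      intro t
      rw [Finset.sum_range_succ']
      have hterm : ∀ j ∈ Finset.range (n + 1),
          ((2 - 1 / 2 ^ (n + 1 - (j+1))) * (iteratedDeriv (j+1) f x / ((j+1).factorial : ℝ))) *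
            (((j+1 : ℕ) : ℝ) * t ^ ((j+1) - 1))
          = (2 - 1 / 2 ^ (n - j)) * (iteratedDeriv j (deriv f) x / (j.factorial : ℝ)) * t ^ j := by
        intro j hj
        have hfact : (((j+1).factorial : ℕ) : ℝ) = ((j:ℝ)+1) * (j.factorial : ℝ) := by
          rw [Nat.factorial_succ]; push_cast; ring
        have hns : n + 1 - (j + 1) = n - j := by omega
        rw [hns, ← iteratedDeriv_succ', hfact, Nat.add_sub_cancel]
        have h2 : (j.factorial : ℝ) ≠ 0 := Nat.cast_ne_zero.2 j.factorial_ne_zero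
        have h1 : ((j:ℝ)+1) ≠ 0 := by positivity
        push_cast
        field_simp
      rw [Finset.sum_congr rfl hterm]
      simp
    have hg : ∀ t : ℝ, HasDerivAt g (g' t) t := by
      intro t
      have hin1 : HasDerivAt (fun t : ℝ => x + 2 * t) 2 t := by
        simpa using ((hasDerivAt_id t).const_mul 2).const_add x
      have hin2 : HasDerivAt (fun t : ℝ => x + t) 1 t := by
        simpa using (hasDerivAt_id t).const_add x
      have hA : HasDerivAt (fun t : ℝ => (1 / 2 ^ (n+1) : ℝ) * f (x + 2 * t))
          ((1 / 2 ^ (n+1)) * (deriv f (x + 2 * t) * 2)) t :=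
        (((hdiff (x + 2 * t)).hasDerivAt.comp t hin1)).const_mul _
      have hB : HasDerivAt (fun t : ℝ => 2 * f (x + t)) (2 * (deriv f (x + t) * 1)) t :=
        ((hdiff (x + t)).hasDerivAt.comp t hin2).const_mul 2
      have hS : HasDerivAt
          (fun t : ℝ => ∑ j ∈ Finset.range (n + 2),
            (2 - 1 / 2 ^ (n + 1 - j)) * (iteratedDeriv j f x / (j.factorial : ℝ)) * t ^ j)
          (∑ j ∈ Finset.range (n + 2),
            ((2 - 1 / 2 ^ (n + 1 - j)) * (iteratedDeriv j f x / (j.factorial : ℝ))) *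
              ((j : ℝ) * t ^ (j - 1))) t :=
        HasDerivAt.fun_sum (fun j _ => (hasDerivAt_pow j t).const_mul _)
      have hcomb := (hA.sub hB).add hS
      have heq : (1 / 2 ^ (n+1) : ℝ) * (deriv f (x + 2 * t) * 2) - 2 * (deriv f (x + t) * 1) +
          (∑ j ∈ Finset.range (n + 2),
            ((2 - 1 / 2 ^ (n + 1 - j)) * (iteratedDeriv j f x / (j.factorial : ℝ))) *
              ((j : ℝ) * t ^ (j - 1))) = g' t := by
        rw [hsum t, hg'def]
        have : (1 / 2 ^ (n+1) : ℝ) * (deriv f (x + 2 * t) * 2) = (1 / 2 ^ n) * deriv f (x + 2 * t) := by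
          rw [pow_succ]; field_simp
        rw [this]; ring
      rw [heq] at hcomb
      exact hcomb
    have hzero : ∀ (u : ℝ → ℝ) (k : ℕ),
        (1 / 2 ^ k : ℝ) * u (x + 2 * 0) - 2 * u (x + 0) +
          ∑ j ∈ Finset.range (k + 1),
            (2 - 1 / 2 ^ (k - j)) * (iteratedDeriv j u x / (j.factorial : ℝ)) * (0:ℝ) ^ j = 0 := by
      intro u k
      have hs : ∑ j ∈ Finset.range (k + 1),
          (2 - 1 / 2 ^ (k - j)) * (iteratedDeriv j u x / (j.factorial : ℝ)) * (0:ℝ) ^ j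
          = (2 - 1 / 2 ^ k) * u x := by
        rw [Finset.sum_eq_single 0]
        · simp [iteratedDeriv_zero]
        · intro b _ hb; simp [zero_pow hb]
        · simp
      rw [hs]
      simp only [mul_zero, add_zero]
      ring
    have hg0 : g 0 = 0 := by rw [hgdef]; exact hzero f (n+1)
    have hg'0 : g' 0 = 0 := by rw [hg'def]; exact hzero (deriv f) n
    set s : Set ℝ := Set.Icc (min 0 h) (max 0 h) with hsdef
    have h0s : (0:ℝ) ∈ s := ⟨min_le_left _ _, le_max_left _ _⟩
    have hhs : h ∈ s := ⟨min_le_right _ _, le_max_right _ _⟩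
    have hbound : ∀ t ∈ s, ‖g' t‖ ≤ C * |h| ^ (n + 1) := by
      intro t hts
      have habs : |t| ≤ |h| := by
        rw [abs_le]
        constructor
        · exact le_trans (le_min (neg_nonpos.2 (abs_nonneg h)) (neg_abs_le h)) hts.1
        · exact le_trans hts.2 (max_le (abs_nonneg h) (le_abs_self h))
      rcases eq_or_ne t 0 with rfl | ht
      · rw [hg'0]
        simp only [norm_zero]
        positivity
      · have := H x hx t (abs_pos.2 ht) (habs.trans hhle)
        rw [Real.norm_eq_abs]
        calc |g' t| ≤ C * |t| ^ (n + 1) := this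
          _ ≤ C * |h| ^ (n + 1) :=
            mul_le_mul_of_nonneg_left (pow_le_pow_left₀ (abs_nonneg t) habs _) hCpos.le
    have hmvt := Convex.norm_image_sub_le_of_norm_hasDerivWithin_le
      (f := g) (f' := g') (s := s) (C := C * |h| ^ (n + 1))
      (fun t hts => (hg t).hasDerivWithinAt) hbound (convex_Icc _ _) h0s hhs
    rw [hg0, sub_zero, sub_zero, Real.norm_eq_abs, Real.norm_eq_abs] at hmvt
    calc |g h| ≤ C * |h| ^ (n + 1) * |h| := hmvt
      _ = C * |h| ^ (n + 1 + 1) := by rw [pow_succ]; ring
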